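/- Sufficiency of dual feasibility for collision avoidance (original formulation): if there exist λ ≥ 0, μ ≥ 0 with −λᵀ d − μᵀ b ≥ d_safe, ‖Aᵀ μ‖ = 1, and Cᵀ λ + Aᵀ μ = 0, then sd(V, O) ≥ d_safe for the polyhedra V = {x : C x ≤ d}, O = {x : A x ≤ b}. -/

import Mathlib

/-!
Weak duality: for `v ∈ V` and `o ∈ O`, the dual certificate gives
`d_safe ≤ ⟪y, v - o⟫` with the unit vector `y = Aᵀμ`. Hence every translation `z` with
`(V + z) ∩ O ≠ ∅` has `‖z‖ ≥ ⟪y, -z⟫ ≥ d_safe`, so `dist ≥ max d_safe 0`; and for every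
`t > max (-d_safe) 0` the translation `t • y` separates the two sets, so `pen ≤ max (-d_safe) 0`.
Subtracting, `sd = dist - pen ≥ d_safe`.
-/

open Matrix

def toE (v : Fin 2 → ℝ) : EuclideanSpace ℝ (Fin 2) := WithLp.toLp 2 v

noncomputable def distSet (V O : Set (EuclideanSpace ℝ (Fin 2))) : ℝ :=
  sInf {r : ℝ | ∃ z : EuclideanSpace ℝ (Fin 2), r = ‖z‖ ∧
    (((fun v => v + z) '' V) ∩ O).Nonempty}

noncomputable def penSet (V O : Set (EuclideanSpace ℝ (Fin 2))) : ℝ :=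
  sInf {r : ℝ | ∃ z : EuclideanSpace ℝ (Fin 2), r = ‖z‖ ∧
    ¬(((fun v => v + z) '' V) ∩ O).Nonempty}

noncomputable def sd (V O : Set (EuclideanSpace ℝ (Fin 2))) : ℝ :=
  distSet V O - penSet V O

theorem le_dotProduct_sub_of_dual_feasible {ι κ n : Type*} [Fintype ι] [Fintype κ] [Fintype n]
    {C : Matrix ι n ℝ} {d : ι → ℝ} {A : Matrix κ n ℝ} {b : κ → ℝ} {lam : ι → ℝ} {mu : κ → ℝ}
    (hlam : 0 ≤ lam) (hmu : 0 ≤ mu) (hsum : Cᵀ *ᵥ lam + Aᵀ *ᵥ mu = 0)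
    {v o : n → ℝ} (hv : C *ᵥ v ≤ d) (ho : A *ᵥ o ≤ b) :
    -(lam ⬝ᵥ d) - mu ⬝ᵥ b ≤ (Aᵀ *ᵥ mu) ⬝ᵥ (v - o) := by
  have hC : Cᵀ *ᵥ lam = -(Aᵀ *ᵥ mu) := eq_neg_of_add_eq_zero_left hsum
  have hv' : (Aᵀ *ᵥ mu) ⬝ᵥ v = -(lam ⬝ᵥ C *ᵥ v) := by
    rw [← neg_neg (Aᵀ *ᵥ mu), ← hC, neg_dotProduct, mulVec_transpose, ← dotProduct_mulVec]
  have ho' : (Aᵀ *ᵥ mu) ⬝ᵥ o = mu ⬝ᵥ A *ᵥ o := by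
    rw [mulVec_transpose, ← dotProduct_mulVec]
  rw [dotProduct_sub, hv', ho']
  linarith [dotProduct_le_dotProduct_of_nonneg_left hv hlam,
    dotProduct_le_dotProduct_of_nonneg_left ho hmu]

theorem inner_toE (a : Fin 2 → ℝ) (x : EuclideanSpace ℝ (Fin 2)) :
    inner ℝ (toE a) x = a ⬝ᵥ WithLp.ofLp x := by
  rw [toE, EuclideanSpace.inner_eq_star_dotProduct, star_trivial, dotProduct_comm]

section Translates

variable {V O : Set (EuclideanSpace ℝ (Fin 2))}

theorem le_distSet (hV : V.Nonempty) (hO : O.Nonempty) {δ : ℝ}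
    (h : ∀ z, ((fun v => v + z) '' V ∩ O).Nonempty → δ ≤ ‖z‖) : δ ≤ distSet V O := by
  obtain ⟨v, hv⟩ := hV
  obtain ⟨o, ho⟩ := hO
  refine le_csInf ⟨‖o - v‖, o - v, rfl, o, ⟨v, hv, add_sub_cancel v o⟩, ho⟩ ?_
  rintro r ⟨z, rfl, hz⟩
  exact h z hz

theorem penSet_le_norm {z : EuclideanSpace ℝ (Fin 2)}
    (hz : ¬((fun v => v + z) '' V ∩ O).Nonempty) : penSet V O ≤ ‖z‖ :=
  csInf_le ⟨0, by rintro r ⟨z, rfl, -⟩; exact norm_nonneg z⟩ ⟨z, rfl, hz⟩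

variable {y : EuclideanSpace ℝ (Fin 2)} {δ : ℝ}

theorem le_distSet_of_separating (hV : V.Nonempty) (hO : O.Nonempty) (hy : ‖y‖ ≤ 1)
    (hsep : ∀ v ∈ V, ∀ o ∈ O, δ ≤ inner ℝ y (v - o)) : max δ 0 ≤ distSet V O := by
  refine le_distSet hV hO fun z ⟨_, ⟨v, hv, hvz⟩, hvzO⟩ => max_le ?_ (norm_nonneg z)
  subst hvz
  calc δ ≤ inner ℝ y (v - (v + z)) := hsep v hv _ hvzO
    _ ≤ ‖y‖ * ‖v - (v + z)‖ := real_inner_le_norm y _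
    _ ≤ ‖z‖ := by
      rw [sub_add_cancel_left, norm_neg]
      exact mul_le_of_le_one_left (norm_nonneg z) hy

theorem penSet_le_of_separating (hy : ‖y‖ = 1)
    (hsep : ∀ v ∈ V, ∀ o ∈ O, δ ≤ inner ℝ y (v - o)) : penSet V O ≤ max (-δ) 0 := by
  refine le_of_forall_gt_imp_ge_of_dense fun t ht => ?_
  rw [max_lt_iff] at ht
  have hsep_t : ¬((fun v => v + t • y) '' V ∩ O).Nonempty := by
    rintro ⟨_, ⟨v, hv, rfl⟩, hvtO⟩
    have := hsep v hv _ hvtO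
    rw [sub_add_cancel_left, inner_neg_right, real_inner_smul_right,
      real_inner_self_eq_norm_sq, hy] at this
    linarith
  simpa [norm_smul, hy, abs_of_pos ht.2] using penSet_le_norm hsep_t

theorem le_sd_of_separating (hV : V.Nonempty) (hO : O.Nonempty) (hy : ‖y‖ = 1)
    (hsep : ∀ v ∈ V, ∀ o ∈ O, δ ≤ inner ℝ y (v - o)) : δ ≤ sd V O := by
  have hdist := le_distSet_of_separating hV hO hy.le hsep
  have hpen := penSet_le_of_separating hy hsep
  rw [sd, ← max_zero_sub_max_neg_zero_eq_self δ]
  exact sub_le_sub hdist hpen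

end Translates

theorem dual_feasibility_implies_collision_avoidance_original_general {L Lm : ℕ}
    (C : Matrix (Fin L) (Fin 2) ℝ) (d : Fin L → ℝ)
    (A : Matrix (Fin Lm) (Fin 2) ℝ) (b : Fin Lm → ℝ)
    (V O : Set (EuclideanSpace ℝ (Fin 2)))
    (hV : V = {x | ∀ i, C.mulVec (WithLp.ofLp x) i ≤ d i})
    (hO : O = {x | ∀ i, A.mulVec (WithLp.ofLp x) i ≤ b i})
    (hVne : V.Nonempty) (hOne : O.Nonempty)
    (dsafe : ℝ)
    (h : ∃ (lam : Fin L → ℝ) (mu : Fin Lm → ℝ),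
      0 ≤ lam ∧ 0 ≤ mu ∧
      -(lam ⬝ᵥ d) - mu ⬝ᵥ b ≥ dsafe ∧
      ‖toE (Aᵀ.mulVec mu)‖ = 1 ∧
      Cᵀ.mulVec lam + Aᵀ.mulVec mu = 0) :
    sd V O ≥ dsafe := by
  obtain ⟨lam, mu, hlam, hmu, hgap, hnorm, hsum⟩ := h
  refine le_sd_of_separating hVne hOne hnorm fun v hv o ho => ?_
  subst hV hO
  calc dsafe ≤ -(lam ⬝ᵥ d) - mu ⬝ᵥ b := hgap
    _ ≤ (Aᵀ *ᵥ mu) ⬝ᵥ (WithLp.ofLp v - WithLp.ofLp o) :=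
      le_dotProduct_sub_of_dual_feasible hlam hmu hsum hv ho
    _ = inner ℝ (toE (Aᵀ *ᵥ mu)) (v - o) := by rw [inner_toE, WithLp.ofLp_sub]

/-- sufficiency, original formulation: if there exist `λ ≥ 0`, `μ ≥ 0` with
`−λᵀd − μᵀb ≥ d_safe`, `‖Aᵀμ‖ = 1` and `Cᵀλ + Aᵀμ = 0`, then `sd(V, O) ≥ d_safe`. -/
theorem dual_feasibility_implies_collision_avoidance_original {L Lm : ℕ}
    (C : Matrix (Fin L) (Fin 2) ℝ) (d : Fin L → ℝ)
    (A : Matrix (Fin Lm) (Fin 2) ℝ) (b : Fin Lm → ℝ)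
    (V O : Set (EuclideanSpace ℝ (Fin 2)))
    (hV : V = {x | ∀ i, C.mulVec (WithLp.ofLp x) i ≤ d i})
    (hO : O = {x | ∀ i, A.mulVec (WithLp.ofLp x) i ≤ b i})
    (hVne : V.Nonempty) (hOne : O.Nonempty)
    (hVc : IsCompact V) (hOc : IsCompact O)
    (dsafe : ℝ)
    (h : ∃ (lam : Fin L → ℝ) (mu : Fin Lm → ℝ),
      0 ≤ lam ∧ 0 ≤ mu ∧
      -(lam ⬝ᵥ d) - mu ⬝ᵥ b ≥ dsafe ∧
      ‖toE (Aᵀ.mulVec mu)‖ = 1 ∧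
      Cᵀ.mulVec lam + Aᵀ.mulVec mu = 0) :
    sd V O ≥ dsafe :=
  dual_feasibility_implies_collision_avoidance_original_general C d A b V O hV hO hVne hOne dsafe h
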